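/- Let K ≥ 1 be an integer and a, b, c ∈ ℝ. Let N be the 2K × 2K real symmetric matrix with diagonal entries N(i,i) = c for 1 ≤ i ≤ 2K except N(1,1) = N(2K,2K) = c + a; with off-diagonal entries N(i,i+1) = N(i+1,i) equal to b when i is odd and equal to a when i is even (1 ≤ i ≤ 2K−1); and all other entries zero. Then the characteristic polynomial of N equals (X − (c+a+b))·(X − (c+a−b))·∏_{j=1}^{K−1} ( (X − c)² − (a² + b² + 2ab·cos(πj/K)) ). Equivalently, the eigenvalues of N are c ± √(a² + b² + 2ab·cos(πj/K)) for j = 1, …, K−1, together with c + a + b and c + a − b. -/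

import Mathlib

/-!
Write `N = c + a A + b B`, where `B` swaps the two sites of every `b`-bond `(2m, 2m+1)` and `A`
those of every `a`-bond `(2m-1, 2m)`, fixing the two end sites. Extending a vector to ghost sites
`-1` and `2K` by reflection turns the end rows into bulk rows, so an eigenvector is a solution of
the bulk equation `a f(n ∓ 1) + b f(n ± 1) = μ f(n)` that is reflected at both ends. The Bloch
waves `f(2m) = cos(mθ + α)`, `f(2m+1) = cos((m+1)θ - α)` solve it with eigenvalue `c + μ` when
`μ e^{2iα} = a + b e^{iθ}`, and they are reflected at the right end when `sin Kθ = 0`. Thus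
`θ = πj/K` gives `c ± √(a² + b² + 2ab cos θ)`, with only `c + a + b` and `c + a - b` surviving at
`j = 0` and `j = K`. For `ab ≠ 0` these `2K` numbers are distinct because `cos` is injective on
`[0, π]`, which determines the characteristic polynomial; the general case follows by continuity
along `(a + t, b + t)`.
-/

open Polynomial Real Matrix

namespace Mesa

def aNeighbor (n : ℤ) : ℤ := if n % 2 = 0 then n - 1 else n + 1

def bNeighbor (n : ℤ) : ℤ := if n % 2 = 0 then n + 1 else n - 1

def aNeighborFin (K : ℕ) (i : Fin (2 * K)) : Fin (2 * K) :=
  ⟨min (aNeighbor i).toNat (2 * K - 1), by have := i.isLt; omega⟩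

def bNeighborFin (K : ℕ) (i : Fin (2 * K)) : Fin (2 * K) :=
  ⟨(bNeighbor i).toNat, by have := i.isLt; unfold bNeighbor; split_ifs <;> omega⟩

noncomputable def mesaMatrix (K : ℕ) (a b c : ℝ) : Matrix (Fin (2 * K)) (Fin (2 * K)) ℝ :=
  c • 1 + a • (1 : Matrix _ _ ℝ).submatrix (aNeighborFin K) id
    + b • (1 : Matrix _ _ ℝ).submatrix (bNeighborFin K) id

theorem eq_mesaMatrix {K : ℕ} {a b c : ℝ} {N : Matrix (Fin (2 * K)) (Fin (2 * K)) ℝ}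
    (hdiag : ∀ i : Fin (2 * K),
      N i i = if i.val = 0 ∨ i.val = 2 * K - 1 then c + a else c)
    (hoff : ∀ i j : Fin (2 * K), i.val + 1 = j.val →
      N i j = (if i.val % 2 = 0 then b else a) ∧
      N j i = (if i.val % 2 = 0 then b else a))
    (hzero : ∀ i j : Fin (2 * K),
      i.val ≠ j.val → i.val + 1 ≠ j.val → j.val + 1 ≠ i.val → N i j = 0) :
    N = mesaMatrix K a b c := by
  ext i j
  have hi := i.isLt
  have hj := j.isLt
  simp only [mesaMatrix, Matrix.add_apply, Matrix.smul_apply, submatrix_apply, one_apply,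
    Fin.ext_iff, aNeighborFin, bNeighborFin, aNeighbor, bNeighbor, id, smul_eq_mul]
  by_cases h₀ : i.val = j.val
  · obtain rfl := Fin.ext h₀
    rw [hdiag]
    split_ifs <;> first | omega | ring
  by_cases h₁ : i.val + 1 = j.val
  · rw [(hoff i j h₁).1]
    split_ifs <;> first | omega | ring
  by_cases h₂ : j.val + 1 = i.val
  · rw [(hoff j i h₂).2]
    split_ifs <;> first | omega | ring
  rw [hzero i j h₀ h₁ h₂]
  split_ifs <;> first | omega | ring

theorem submatrix_one_mulVec {n R : Type*} [Fintype n] [DecidableEq n] [Semiring R]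
    (g : n → n) (v : n → R) : (1 : Matrix n n R).submatrix g id *ᵥ v = v ∘ g := by
  ext i
  simp [mulVec, dotProduct, one_apply]

theorem aNeighborFin_eq {K : ℕ} {f : ℤ → ℝ} (hleft : f (-1) = f 0)
    (hright : f (2 * K) = f (2 * K - 1)) (i : Fin (2 * K)) :
    f (aNeighborFin K i) = f (aNeighbor i) := by
  have hi := i.isLt
  have : ((aNeighborFin K i : ℕ) : ℤ) = aNeighbor i ∨
      (aNeighbor i = -1 ∧ (aNeighborFin K i : ℕ) = 0) ∨
      (aNeighbor i = 2 * K ∧ ((aNeighborFin K i : ℕ) : ℤ) = 2 * K - 1) := by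
    simp only [aNeighborFin, aNeighbor]
    split_ifs <;> omega
  rcases this with h | ⟨h, h'⟩ | ⟨h, h'⟩
  · rw [h]
  · rw [h, h', hleft, Nat.cast_zero]
  · rw [h, h', hright]

theorem bNeighborFin_eq {K : ℕ} (i : Fin (2 * K)) :
    ((bNeighborFin K i : ℕ) : ℤ) = bNeighbor i := by
  have hi := i.isLt
  simp only [bNeighborFin, bNeighbor]
  split_ifs <;> omega

theorem mesaMatrix_mulVec_eq_smul {K : ℕ} {a b c μ : ℝ} {f : ℤ → ℝ}
    (hbulk : ∀ n, a * f (aNeighbor n) + b * f (bNeighbor n) = μ * f n)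
    (hleft : f (-1) = f 0) (hright : f (2 * K) = f (2 * K - 1)) :
    mesaMatrix K a b c *ᵥ (fun i => f i) = (c + μ) • fun i : Fin (2 * K) => f i := by
  ext i
  simp only [mesaMatrix, add_mulVec, smul_mulVec, one_mulVec, submatrix_one_mulVec, Pi.add_apply,
    Pi.smul_apply, Function.comp_apply, smul_eq_mul, aNeighborFin_eq hleft hright, bNeighborFin_eq]
  linear_combination hbulk i

theorem cos_combination_of_polar {a b μ θ α : ℝ} (h₁ : μ * cos (2 * α) = a + b * cos θ)
    (h₂ : μ * sin (2 * α) = b * sin θ) (x : ℝ) :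
    a * cos (x - α) + b * cos (x + θ - α) = μ * cos (x + α) := by
  rw [cos_two_mul'] at h₁
  rw [sin_two_mul] at h₂
  simp only [cos_add, cos_sub, sin_add]
  linear_combination (-(cos x * cos α + sin x * sin α)) * h₁
    + (-(cos x * sin α - sin x * cos α)) * h₂
    + (μ * (cos x * cos α - sin x * sin α)) * sin_sq_add_cos_sq α

noncomputable def blochWave (θ α : ℝ) (n : ℤ) : ℝ :=
  if n % 2 = 0 then cos ((n / 2 : ℤ) * θ + α) else cos ((n / 2 + 1 : ℤ) * θ - α)

theorem blochWave_two_mul (θ α : ℝ) (m : ℤ) : blochWave θ α (2 * m) = cos (m * θ + α) := by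
  simp [blochWave]

theorem blochWave_two_mul_add_one (θ α : ℝ) (m : ℤ) :
    blochWave θ α (2 * m + 1) = cos ((m + 1) * θ - α) := by
  simp [blochWave, show (2 * m + 1) / 2 = m by omega]

theorem blochWave_bulk {a b μ θ α : ℝ} (h₁ : μ * cos (2 * α) = a + b * cos θ)
    (h₂ : μ * sin (2 * α) = b * sin θ) (n : ℤ) :
    a * blochWave θ α (aNeighbor n) + b * blochWave θ α (bNeighbor n) = μ * blochWave θ α n := by
  obtain ⟨m, rfl | rfl⟩ := Int.even_or_odd' n
  · have ha : aNeighbor (2 * m) = 2 * (m - 1) + 1 := by unfold aNeighbor; split_ifs <;> omega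
    have hb : bNeighbor (2 * m) = 2 * m + 1 := by unfold bNeighbor; split_ifs <;> omega
    rw [ha, hb, blochWave_two_mul_add_one, blochWave_two_mul_add_one, blochWave_two_mul]
    convert cos_combination_of_polar h₁ h₂ (m * θ) using 3 <;> push_cast <;> ring_nf
  · have ha : aNeighbor (2 * m + 1) = 2 * (m + 1) := by unfold aNeighbor; split_ifs <;> omega
    have hb : bNeighbor (2 * m + 1) = 2 * m := by unfold bNeighbor; split_ifs <;> omega
    rw [ha, hb, blochWave_two_mul, blochWave_two_mul, blochWave_two_mul_add_one]
    convert cos_combination_of_polar (θ := -θ) (α := -α) (by simpa using h₁) (by simpa using h₂)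
      ((m + 1) * θ) using 3 <;> push_cast <;> ring_nf

theorem blochWave_neg_one (θ α : ℝ) : blochWave θ α (-1) = blochWave θ α 0 := by
  simp [blochWave]

theorem blochWave_two_mul_sub_one {θ α : ℝ} {m : ℤ} (h : sin (m * θ) = 0) :
    blochWave θ α (2 * m) = blochWave θ α (2 * m - 1) := by
  rw [show 2 * m - 1 = 2 * (m - 1) + 1 by ring, blochWave_two_mul, blochWave_two_mul_add_one]
  push_cast
  rw [sub_add_cancel, cos_add, cos_sub, h]
  ring

theorem blochWave_ne_zero {K : ℕ} (hK : 1 ≤ K) {θ α : ℝ} (h : sin θ ≠ 0 ∨ cos α ≠ 0) :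
    (fun i : Fin (2 * K) => blochWave θ α i) ≠ 0 := by
  intro hzero
  have h0 : cos α = 0 := by simpa [blochWave] using congrFun hzero ⟨0, by omega⟩
  have h1 : cos (θ - α) = 0 := by simpa [blochWave] using congrFun hzero ⟨1, by omega⟩
  have hsinα : sin α ^ 2 = 1 := by nlinarith [sin_sq_add_cos_sq α]
  have hsinθ : sin θ = 0 := by
    rw [cos_sub, h0] at h1
    calc sin θ = sin θ * sin α ^ 2 := by rw [hsinα, mul_one]
      _ = (cos θ * 0 + sin θ * sin α) * sin α := by ring
      _ = 0 := by rw [h1, zero_mul]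
  tauto

theorem isRoot_charpoly_of_mulVec_eq_smul {n 𝕜 : Type*} [Fintype n] [DecidableEq n] [Field 𝕜]
    {M : Matrix n n 𝕜} {r : 𝕜} {v : n → 𝕜} (hv : v ≠ 0) (h : M *ᵥ v = r • v) :
    M.charpoly.IsRoot r := by
  rw [IsRoot, eval_charpoly, ← exists_mulVec_eq_zero_iff]
  exact ⟨v, hv, by simp [sub_mulVec, h]⟩

theorem isRoot_charpoly_mesaMatrix {K : ℕ} (hK : 1 ≤ K) {a b c μ θ α : ℝ}
    (hKθ : sin (K * θ) = 0) (h₁ : μ * cos (2 * α) = a + b * cos θ)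
    (h₂ : μ * sin (2 * α) = b * sin θ) (hne : sin θ ≠ 0 ∨ cos α ≠ 0) :
    (mesaMatrix K a b c).charpoly.IsRoot (c + μ) :=
  isRoot_charpoly_of_mulVec_eq_smul (blochWave_ne_zero hK hne)
    (mesaMatrix_mulVec_eq_smul (blochWave_bulk h₁ h₂) (blochWave_neg_one θ α)
      (blochWave_two_mul_sub_one (by simpa using hKθ)))

theorem exists_mul_cos_two_mul_eq {x y μ : ℝ} (h : x ^ 2 + y ^ 2 = μ ^ 2) :
    ∃ α, μ * cos (2 * α) = x ∧ μ * sin (2 * α) = y := by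
  obtain rfl | hμ := eq_or_ne μ 0
  · exact ⟨0, by nlinarith, by nlinarith⟩
  set z : ℂ := ⟨x / μ, y / μ⟩
  have hz : ‖z‖ = 1 := by
    rw [Complex.norm_def, Complex.normSq_mk, Real.sqrt_eq_one]
    field_simp
    linarith
  refine ⟨Complex.arg z / 2, ?_, ?_⟩
  · rw [mul_div_cancel₀ _ two_ne_zero, ← one_mul (cos _), ← hz, Complex.norm_mul_cos_arg]
    exact mul_div_cancel₀ x hμ
  · rw [mul_div_cancel₀ _ two_ne_zero, ← one_mul (sin _), ← hz, Complex.norm_mul_sin_arg]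
    exact mul_div_cancel₀ y hμ

noncomputable def dispersion (a b θ : ℝ) : ℝ := a ^ 2 + b ^ 2 + 2 * a * b * cos θ

theorem dispersion_zero (a b : ℝ) : dispersion a b 0 = (a + b) ^ 2 := by
  simp [dispersion]; ring

theorem dispersion_pi (a b : ℝ) : dispersion a b π = (a - b) ^ 2 := by
  simp [dispersion]; ring

theorem dispersion_pos {a b θ : ℝ} (hb : b ≠ 0) (hθ : sin θ ≠ 0) : 0 < dispersion a b θ := by
  have : dispersion a b θ = (a + b * cos θ) ^ 2 + (b * sin θ) ^ 2 := by
    simp only [dispersion]; linear_combination (-b ^ 2) * sin_sq_add_cos_sq θ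
  rw [this]
  positivity

theorem dispersion_injOn {a b : ℝ} (ha : a ≠ 0) (hb : b ≠ 0) :
    Set.InjOn (dispersion a b) (Set.Icc 0 π) := fun θ hθ φ hφ h =>
  injOn_cos hθ hφ <| mul_left_cancel₀ (by positivity : 2 * a * b ≠ 0) <| by
    simp only [dispersion] at h; linarith

theorem exists_polar_of_sq_eq_dispersion {a b μ θ : ℝ} (h : μ ^ 2 = dispersion a b θ) :
    ∃ α, μ * cos (2 * α) = a + b * cos θ ∧ μ * sin (2 * α) = b * sin θ :=
  exists_mul_cos_two_mul_eq <| by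
    rw [h, dispersion]; linear_combination b ^ 2 * sin_sq_add_cos_sq θ

theorem isCoprime_X_sub_C_iff {F : Type*} [Field F] {r : F} {q : F[X]} :
    IsCoprime (X - C r) q ↔ ¬ q.IsRoot r := by
  rw [(irreducible_X_sub_C r).coprime_iff_not_dvd, dvd_iff_isRoot]

theorem X_sub_C_sq_sub_C_sq {R : Type*} [CommRing R] (c μ : R) :
    (X - C c) ^ 2 - C (μ ^ 2) = (X - C (c + μ)) * (X - C (c - μ)) := by
  simp only [map_add, map_sub, map_pow]; ring

theorem isRoot_X_sub_C_sq_sub_C_iff {R : Type*} [CommRing R] {c ρ μ : R} :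
    ((X - C c) ^ 2 - C ρ).IsRoot (c + μ) ↔ μ ^ 2 = ρ := by
  simp [sub_eq_zero]

theorem isCoprime_X_sub_C_sq_sub_C {c ρ ρ' : ℝ} (hρ : 0 ≤ ρ) (h : ρ ≠ ρ') :
    IsCoprime ((X - C c) ^ 2 - C ρ) ((X - C c) ^ 2 - C ρ') := by
  have hμ : √ρ ^ 2 = ρ := sq_sqrt hρ
  rw [← hμ, X_sub_C_sq_sub_C_sq, sub_eq_add_neg c]
  refine .mul_left ?_ ?_ <;> rw [isCoprime_X_sub_C_iff, isRoot_X_sub_C_sq_sub_C_iff]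
  · rwa [hμ]
  · rwa [neg_sq, hμ]

theorem X_sub_C_sq_sub_C_sq_dvd {p : ℝ[X]} {c μ : ℝ} (hμ : μ ≠ 0) (hplus : p.IsRoot (c + μ))
    (hminus : p.IsRoot (c - μ)) : (X - C c) ^ 2 - C (μ ^ 2) ∣ p := by
  rw [X_sub_C_sq_sub_C_sq]
  refine IsCoprime.mul_dvd ?_ (dvd_iff_isRoot.2 hplus) (dvd_iff_isRoot.2 hminus)
  rw [isCoprime_X_sub_C_iff, root_X_sub_C]
  contrapose! hμ
  linarith

noncomputable def mesaCharpoly (K : ℕ) (a b c : ℝ) : ℝ[X] :=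
  (X - C (c + a + b)) * (X - C (c + a - b)) *
    ∏ j ∈ Finset.range (K - 1), ((X - C c) ^ 2 - C (dispersion a b (π * (j + 1) / K)))

theorem monic_X_sub_C_sq_sub_C {F : Type*} [Field F] (c ρ : F) :
    ((X - C c) ^ 2 - C ρ).Monic := by
  monicity!

theorem natDegree_X_sub_C_sq_sub_C {F : Type*} [Field F] (c ρ : F) :
    ((X - C c) ^ 2 - C ρ).natDegree = 2 := by
  rw [natDegree_sub_C, natDegree_pow, natDegree_X_sub_C]

theorem mesaCharpoly_monic (K : ℕ) (a b c : ℝ) : (mesaCharpoly K a b c).Monic :=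
  ((monic_X_sub_C _).mul (monic_X_sub_C _)).mul <|
    monic_prod_of_monic _ _ fun _ _ => monic_X_sub_C_sq_sub_C _ _

theorem natDegree_mesaCharpoly {K : ℕ} (hK : 1 ≤ K) (a b c : ℝ) :
    (mesaCharpoly K a b c).natDegree = 2 * K := by
  rw [mesaCharpoly, ((monic_X_sub_C _).mul (monic_X_sub_C _)).natDegree_mul
    (monic_prod_of_monic _ _ fun _ _ => monic_X_sub_C_sq_sub_C _ _),
    (monic_X_sub_C _).natDegree_mul (monic_X_sub_C _),
    natDegree_prod_of_monic _ _ fun _ _ => monic_X_sub_C_sq_sub_C _ _]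
  simp only [natDegree_X_sub_C, natDegree_X_sub_C_sq_sub_C, Finset.sum_const, Finset.card_range,
    smul_eq_mul]
  omega

theorem X_sub_C_sq_sub_dispersion_dvd_charpoly {K : ℕ} (hK : 1 ≤ K) {a b θ : ℝ} (hb : b ≠ 0)
    (hKθ : sin (K * θ) = 0) (hθ : sin θ ≠ 0) (c : ℝ) :
    (X - C c) ^ 2 - C (dispersion a b θ) ∣ (mesaMatrix K a b c).charpoly := by
  have hpos := dispersion_pos (a := a) hb hθ
  have hroot : ∀ μ, μ ^ 2 = dispersion a b θ → (mesaMatrix K a b c).charpoly.IsRoot (c + μ) :=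
    fun μ hμ => by
      obtain ⟨α, h₁, h₂⟩ := exists_polar_of_sq_eq_dispersion hμ
      exact isRoot_charpoly_mesaMatrix hK hKθ h₁ h₂ (.inl hθ)
  rw [← sq_sqrt hpos.le]
  refine X_sub_C_sq_sub_C_sq_dvd (sqrt_pos.2 hpos).ne' (hroot _ (sq_sqrt hpos.le)) ?_
  rw [sub_eq_add_neg]
  exact hroot _ (by rw [neg_sq, sq_sqrt hpos.le])

theorem X_sub_C_mul_X_sub_C_dvd_charpoly {K : ℕ} (hK : 1 ≤ K) {a b : ℝ} (hb : b ≠ 0) (c : ℝ) :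
    (X - C (c + a + b)) * (X - C (c + a - b)) ∣ (mesaMatrix K a b c).charpoly := by
  have hroot₁ : (mesaMatrix K a b c).charpoly.IsRoot (c + a + b) := by
    rw [add_assoc]
    exact isRoot_charpoly_mesaMatrix hK (θ := 0) (α := 0) (by simp) (by simp) (by simp) (by simp)
  have hroot₂ : (mesaMatrix K a b c).charpoly.IsRoot (c + a - b) := by
    rw [add_sub_assoc]
    exact isRoot_charpoly_mesaMatrix hK (θ := π) (α := 0) (sin_nat_mul_pi K) (by simp; ring)
      (by simp) (by simp)
  refine IsCoprime.mul_dvd ?_ (dvd_iff_isRoot.2 hroot₁) (dvd_iff_isRoot.2 hroot₂)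
  rw [isCoprime_X_sub_C_iff, root_X_sub_C]
  contrapose! hb
  linarith

theorem pi_mul_succ_div_mem_Ioo {K j : ℕ} (hj : j + 1 < K) : π * (j + 1) / K ∈ Set.Ioo 0 π := by
  have : (j : ℝ) + 1 < K := by exact_mod_cast hj
  constructor
  · exact div_pos (by positivity) (by linarith)
  · rw [div_lt_iff₀ (by linarith)]
    nlinarith [pi_pos]

theorem sin_mul_pi_mul_succ_div {K : ℕ} (hK : K ≠ 0) (j : ℕ) : sin (K * (π * (j + 1) / K)) = 0 := by
  rw [mul_div_cancel₀ _ (Nat.cast_ne_zero.2 hK), mul_comm, ← Nat.cast_succ]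
  exact sin_nat_mul_pi _

theorem charpoly_mesaMatrix_of_ne_zero {K : ℕ} (hK : 1 ≤ K) {a b : ℝ} (ha : a ≠ 0) (hb : b ≠ 0)
    (c : ℝ) : (mesaMatrix K a b c).charpoly = mesaCharpoly K a b c := by
  set θ : ℕ → ℝ := fun j => π * (j + 1) / K with hθ_def
  have hθ : ∀ j ∈ Finset.range (K - 1), θ j ∈ Set.Ioo 0 π := fun j hj =>
    pi_mul_succ_div_mem_Ioo (by rw [Finset.mem_range] at hj; omega)
  have hθinj : Function.Injective θ := fun i j h => by
    simpa [hθ_def, pi_ne_zero, show (K : ℝ) ≠ 0 by positivity] using h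
  have hdisp : ∀ j ∈ Finset.range (K - 1), ∀ φ ∈ Set.Icc 0 π, φ ≠ θ j →
      dispersion a b φ ≠ dispersion a b (θ j) := fun j hj φ hφ hne h =>
    hne (dispersion_injOn ha hb hφ (Set.Ioo_subset_Icc_self (hθ j hj)) h)
  have hQ : ∏ j ∈ Finset.range (K - 1), ((X - C c) ^ 2 - C (dispersion a b (θ j))) ∣
      (mesaMatrix K a b c).charpoly := by
    refine Finset.prod_dvd_of_coprime (fun i hi j hj hij => ?_) fun j hj =>
      X_sub_C_sq_sub_dispersion_dvd_charpoly hK hb (sin_mul_pi_mul_succ_div (by omega) j)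
        (sin_pos_of_mem_Ioo (hθ j hj)).ne' c
    exact isCoprime_X_sub_C_sq_sub_C (dispersion_pos hb (sin_pos_of_mem_Ioo (hθ i hi)).ne').le
      (hdisp j hj _ (Set.Ioo_subset_Icc_self (hθ i hi)) (hθinj.ne hij))
  have hLQ : IsCoprime ((X - C (c + a + b)) * (X - C (c + a - b)))
      (∏ j ∈ Finset.range (K - 1), ((X - C c) ^ 2 - C (dispersion a b (θ j)))) := by
    refine .mul_left (.prod_right fun j hj => ?_) (.prod_right fun j hj => ?_)
    · rw [add_assoc, isCoprime_X_sub_C_iff, isRoot_X_sub_C_sq_sub_C_iff, ← dispersion_zero]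
      exact hdisp j hj 0 (Set.left_mem_Icc.2 pi_pos.le) (hθ j hj).1.ne
    · rw [add_sub_assoc, isCoprime_X_sub_C_iff, isRoot_X_sub_C_sq_sub_C_iff, ← dispersion_pi]
      exact hdisp j hj π (Set.right_mem_Icc.2 pi_pos.le) (hθ j hj).2.ne'
  refine eq_of_monic_of_dvd_of_natDegree_le (mesaCharpoly_monic K a b c) (charpoly_monic _)
    (hLQ.mul_dvd (X_sub_C_mul_X_sub_C_dvd_charpoly hK hb c) hQ) ?_
  rw [natDegree_mesaCharpoly hK, charpoly_natDegree_eq_dim, Fintype.card_fin]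

theorem charpoly_mesaMatrix {K : ℕ} (hK : 1 ≤ K) (a b c : ℝ) :
    (mesaMatrix K a b c).charpoly = mesaCharpoly K a b c := by
  refine Polynomial.funext fun x => ?_
  have hlhs : Continuous fun t => (mesaMatrix K (a + t) (b + t) c).charpoly.eval x := by
    simp only [eval_charpoly, mesaMatrix]
    exact (continuous_const.sub (by fun_prop)).matrix_det
  have hrhs : Continuous fun t => (mesaCharpoly K (a + t) (b + t) c).eval x := by
    simp only [mesaCharpoly, dispersion, eval_mul, eval_prod, eval_sub, eval_pow, eval_X, eval_C]
    fun_prop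
  have hdense : Dense ({-a, -b}ᶜ : Set ℝ) := (Set.toFinite _).countable.dense_compl ℝ
  have := congrFun (hlhs.ext_on hdense hrhs fun t ht => by
    simp only [Set.mem_compl_iff, Set.mem_insert_iff, Set.mem_singleton_iff, not_or] at ht
    have ha : a + t ≠ 0 := fun h => ht.1 (by linarith)
    have hb : b + t ≠ 0 := fun h => ht.2 (by linarith)
    simp only [charpoly_mesaMatrix_of_ne_zero hK ha hb]) 0
  simpa using this

end Mesa

/-- Characteristic polynomial of the `2K × 2K` mesa interaction matrix `M⁻¹`
(tridiagonal, diagonal `c` except corners `c+a`, off-diagonal alternating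
`b, a, b, a, …, b`): its eigenvalues are `c ± √(a²+b²+2ab cos(πj/K))`
for `j = 1, …, K-1` together with `c+a+b` and `c+a-b`. -/
theorem mesa_interaction_matrix_charpoly (K : ℕ) (hK : 1 ≤ K) (a b c : ℝ)
    (N : Matrix (Fin (2 * K)) (Fin (2 * K)) ℝ)
    (hdiag : ∀ i : Fin (2 * K),
      N i i = if i.val = 0 ∨ i.val = 2 * K - 1 then c + a else c)
    (hoff : ∀ i j : Fin (2 * K), i.val + 1 = j.val →
      N i j = (if i.val % 2 = 0 then b else a) ∧
      N j i = (if i.val % 2 = 0 then b else a))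
    (hzero : ∀ i j : Fin (2 * K),
      i.val ≠ j.val → i.val + 1 ≠ j.val → j.val + 1 ≠ i.val → N i j = 0) :
    N.charpoly = (X - C (c + a + b)) * (X - C (c + a - b)) *
      ∏ j ∈ Finset.range (K - 1),
        ((X - C c) ^ 2
          - C (a ^ 2 + b ^ 2 + 2 * a * b * Real.cos (Real.pi * (j + 1) / K))) := by
  rw [Mesa.eq_mesaMatrix hdiag hoff hzero]
  exact Mesa.charpoly_mesaMatrix hK a b c
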